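/- arXiv:1010.1412 — 4 statements merged into one kernel-verified Lean document; each statement's English description precedes it below -/
import Mathlib

section
/- Let (Z_n) be a sequence of integrable real random variables such that sup_n E[|Z_n - Z_n'|] ≤ C, where Z_n' is an independent copy of Z_n. Then the sequence (Z_n - E[Z_n]) is tight, i.e., for every ε > 0 there is r such that P(|Z_n - E[Z_n]| > r) < ε for all n. -/
open MeasureTheory ProbabilityTheory

theorem tightness_of_bounded_iid_diff {Ω : Type*} [MeasureSpace Ω]
    [IsProbabilityMeasure (ℙ : Measure Ω)]
    (Z Z' : ℕ → Ω → ℝ) (C : ℝ)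
    (hint : ∀ n, Integrable (Z n)) (hint' : ∀ n, Integrable (Z' n))
    (hid : ∀ n, IdentDistrib (Z' n) (Z n) ℙ ℙ)
    (hindep : ∀ n, IndepFun (Z n) (Z' n) ℙ)
    (hC : ∀ n, (∫ ω, |Z n ω - Z' n ω|) ≤ C) :
    ∀ ε > 0, ∃ r : ℝ, ∀ n,
      (ℙ {ω | |Z n ω - ∫ ω', Z n ω'| > r}).toReal < ε := by
  -- Key step: E |Z n - E Z n| ≤ C for every n.
  have key : ∀ n, (∫ ω, |Z n ω - ∫ ω', Z n ω'|) ≤ C := by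
    intro n
    have hZm : AEMeasurable (Z n) ℙ := (hint n).aemeasurable
    have hZ'm : AEMeasurable (Z' n) ℙ := (hint' n).aemeasurable
    set ν₁ : Measure ℝ := Measure.map (Z n) ℙ with hν₁
    set ν₂ : Measure ℝ := Measure.map (Z' n) ℙ with hν₂
    haveI : IsProbabilityMeasure ν₁ := Measure.isProbabilityMeasure_map hZm
    haveI : IsProbabilityMeasure ν₂ := Measure.isProbabilityMeasure_map hZ'm
    have hprod : Measure.map (fun ω => (Z n ω, Z' n ω)) ℙ = ν₁.prod ν₂ :=
      (indepFun_iff_map_prod_eq_prod_map_map hZm hZ'm).mp (hindep n)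
    have hpairm : AEMeasurable (fun ω => (Z n ω, Z' n ω)) ℙ := hZm.prodMk hZ'm
    have habs : StronglyMeasurable (fun p : ℝ × ℝ => |p.1 - p.2|) :=
      (continuous_abs.comp (continuous_fst.sub continuous_snd)).stronglyMeasurable
    -- the function |p.1 - p.2| is integrable w.r.t. ν₁.prod ν₂
    have hint_joint : Integrable (fun p : ℝ × ℝ => |p.1 - p.2|) (ν₁.prod ν₂) := by
      rw [← hprod]
      rw [integrable_map_measure habs.aestronglyMeasurable hpairm]
      exact ((hint n).sub (hint' n)).abs
    -- rewrite E|Z - Z'| as an integral over the product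
    have e1 : (∫ ω, |Z n ω - Z' n ω|) = ∫ p, |p.1 - p.2| ∂(ν₁.prod ν₂) := by
      rw [← hprod, integral_map hpairm habs.aestronglyMeasurable]
    -- Fubini
    have e2 : (∫ p, |p.1 - p.2| ∂(ν₁.prod ν₂)) = ∫ x, (∫ y, |x - y| ∂ν₂) ∂ν₁ :=
      integral_prod _ hint_joint
    set g : ℝ → ℝ := fun x => ∫ y, |x - y| ∂ν₂ with hg
    have hg_int : Integrable g ν₁ := hint_joint.integral_prod_left
    have hgZ_int : Integrable (fun ω => g (Z n ω)) ℙ :=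
      (integrable_map_measure hg_int.aestronglyMeasurable hZm).mp hg_int
    have e3 : (∫ x, g x ∂ν₁) = ∫ ω, g (Z n ω) ∂ℙ :=
      integral_map hZm hg_int.aestronglyMeasurable
    -- pointwise bound: |Z n ω - E Z n| ≤ g (Z n ω)
    have hEZ : (∫ ω', Z' n ω') = ∫ ω', Z n ω' := (hid n).integral_eq
    have hbound : ∀ ω, |Z n ω - ∫ ω', Z n ω'| ≤ g (Z n ω) := by
      intro ω
      have h1 : (∫ ω', (Z n ω - Z' n ω')) = Z n ω - ∫ ω', Z n ω' := by
        rw [integral_sub (integrable_const _) (hint' n), integral_const, hEZ]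
        simp
      calc |Z n ω - ∫ ω', Z n ω'| = |∫ ω', (Z n ω - Z' n ω')| := by rw [h1]
        _ ≤ ∫ ω', |Z n ω - Z' n ω'| := by
            simpa [Real.norm_eq_abs] using
              norm_integral_le_integral_norm (fun ω' => Z n ω - Z' n ω')
        _ = g (Z n ω) := by
            show _ = ∫ y, |Z n ω - y| ∂ν₂
            have hc : Continuous fun y : ℝ => |Z n ω - y| := by fun_prop
            rw [hν₂]
            exact (integral_map hZ'm hc.stronglyMeasurable.aestronglyMeasurable).symm
      -- (bound done)
    calc (∫ ω, |Z n ω - ∫ ω', Z n ω'|) ≤ ∫ ω, g (Z n ω) ∂ℙ :=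
          integral_mono ((hint n).sub (integrable_const _)).abs hgZ_int hbound
      _ = ∫ x, g x ∂ν₁ := e3.symm
      _ = ∫ p, |p.1 - p.2| ∂(ν₁.prod ν₂) := e2.symm
      _ = ∫ ω, |Z n ω - Z' n ω| := e1.symm
      _ ≤ C := hC n
  -- C is nonnegative
  have hC0 : 0 ≤ C := le_trans (integral_nonneg fun ω => abs_nonneg _) (hC 0)
  intro ε hε
  refine ⟨C / ε + 1, fun n => ?_⟩
  set r : ℝ := C / ε + 1 with hr
  have hr0 : 0 < r := by positivity
  have hmarkov := mul_meas_ge_le_integral_of_nonneg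
    (Filter.Eventually.of_forall fun ω => abs_nonneg (Z n ω - ∫ ω', Z n ω'))
    ((hint n).sub (integrable_const _)).abs r
  have hsub : ℙ {ω | |Z n ω - ∫ ω', Z n ω'| > r} ≤ ℙ {ω | r ≤ |Z n ω - ∫ ω', Z n ω'|} :=
    measure_mono fun ω hω => le_of_lt (Set.mem_setOf.mp hω)
  have hfin1 : ℙ {ω | r ≤ |Z n ω - ∫ ω', Z n ω'|} ≠ ⊤ := measure_ne_top _ _
  have hle : (ℙ {ω | |Z n ω - ∫ ω', Z n ω'| > r}).toReal
      ≤ (ℙ {ω | r ≤ |Z n ω - ∫ ω', Z n ω'|}).toReal :=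
    ENNReal.toReal_mono hfin1 hsub
  have h2 : r * (ℙ {ω | r ≤ |Z n ω - ∫ ω', Z n ω'|}).toReal ≤ C :=
    le_trans hmarkov (key n)
  have h3 : (ℙ {ω | r ≤ |Z n ω - ∫ ω', Z n ω'|}).toReal ≤ C / r :=
    (le_div_iff₀' hr0).mpr h2
  have h4 : C / r < ε := by
    rw [div_lt_iff₀ hr0, hr]
    have : C / ε * ε = C := div_mul_cancel₀ C (ne_of_gt hε)
    nlinarith
  exact lt_of_le_of_lt (le_trans hle h3) h4
end

section
/- Let (Z_n) be integrable random variables with E Z_{n+1} ≥ E Z_n for all n, and suppose there are constants R ≥ 1, C such that for all n ≥ R, E Z_{n+1} ≤ (1/2)(E Z_{n+1-R} + E Z_{n+1-R}) - (1/2) E|Z_{n+1-R} - Z'_{n+1-R}| + C, where Z'_m is an independent copy of Z_m. Then sup_n E|Z_n - Z'_n| ≤ 2C, and consequently (Z_n - E Z_n) is tight. -/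
/-!
Shifting the recursion by `R - 1` and using monotonicity of the means gives
`E Z_n ≤ E Z_{n+R} ≤ E Z_n - E|Z_n - Z'_n| / 2 + C`, hence `E|Z_n - Z'_n| ≤ 2C`.
For tightness, Jensen's inequality for `|·|` in the second variable gives
`E|X - E X| ≤ E|X - X'|` for an independent copy `X'`, so the mean absolute deviations of the
`Z_n` are uniformly bounded and Markov's inequality concludes.
-/

open MeasureTheory ProbabilityTheory

namespace MeasureTheory

lemma MeasurePreserving.identDistrib_comp {Ω Ω' E : Type*} [MeasurableSpace Ω]
    [MeasurableSpace Ω'] [MeasurableSpace E] {μ : Measure Ω} {ν : Measure Ω'} {f : Ω' → Ω}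
    {V : Ω → E} (hf : MeasurePreserving f ν μ) (hV : AEMeasurable V μ) :
    IdentDistrib (V ∘ f) V ν μ where
  aemeasurable_fst := hV.comp_quasiMeasurePreserving hf.quasiMeasurePreserving
  aemeasurable_snd := hV
  map_eq := by
    rw [← AEMeasurable.map_map_of_aemeasurable (hf.map_eq ▸ hV) hf.measurable.aemeasurable,
      hf.map_eq]

end MeasureTheory

namespace ProbabilityTheory

variable {Ω : Type*} [MeasurableSpace Ω] {μ : Measure Ω} [IsProbabilityMeasure μ] {X Y : Ω → ℝ}

lemma abs_sub_integral_le_integral_abs_sub (hX : Integrable X μ) (x : ℝ) :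
    |x - μ[X]| ≤ ∫ ω, |x - X ω| ∂μ := by
  have hmean : x - μ[X] = ∫ ω, (x - X ω) ∂μ := by
    rw [integral_sub (integrable_const x) hX, integral_const, probReal_univ, one_smul]
  rw [hmean]
  exact abs_integral_le_integral_abs

lemma integral_abs_sub_integral_le_integral_prod (hX : Integrable X μ) :
    ∫ ω, |X ω - μ[X]| ∂μ ≤ ∫ p, |X p.1 - X p.2| ∂(μ.prod μ) := by
  have hint : Integrable (fun p : Ω × Ω ↦ |X p.1 - X p.2|) (μ.prod μ) :=
    (hX.comp_fst μ |>.sub (hX.comp_snd μ)).abs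
  rw [integral_prod _ hint]
  exact integral_mono (hX.sub (integrable_const _)).abs hint.integral_prod_left
    (abs_sub_integral_le_integral_abs_sub hX <| X ·)

lemma integral_abs_sub_integral_le_integral_abs_sub (hX : Integrable X μ)
    (hcopy : IdentDistrib Y X μ μ) (hind : IndepFun X Y μ) :
    ∫ ω, |X ω - μ[X]| ∂μ ≤ ∫ ω, |X ω - Y ω| ∂μ := by
  have hpair : IdentDistrib (fun p : Ω × Ω ↦ (X p.1, X p.2)) (fun ω ↦ (X ω, Y ω)) (μ.prod μ) μ :=
    (measurePreserving_fst.identDistrib_comp hX.aemeasurable).prodMk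
      ((measurePreserving_snd.identDistrib_comp hX.aemeasurable).trans hcopy.symm)
      (indepFun_prod₀ hX.aemeasurable hX.aemeasurable) hind
  have hdist := hpair.comp (continuous_fst.sub continuous_snd).abs.measurable
  exact (integral_abs_sub_integral_le_integral_prod hX).trans_eq hdist.integral_eq

end ProbabilityTheory

lemma le_two_mul_of_monotone_of_le_sub {e d : ℕ → ℝ} {C : ℝ} {R : ℕ} (he : Monotone e)
    (h : ∀ n, R ≤ n → e (n + 1) ≤ e (n + 1 - R) - d (n + 1 - R) / 2 + C) {n : ℕ} (hn : 1 ≤ n) :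
    d n ≤ 2 * C := by
  have hstep := h (n + R - 1) (by omega)
  rw [show n + R - 1 + 1 - R = n by omega] at hstep
  linarith [he (show n ≤ n + R - 1 + 1 by omega)]

namespace MeasureTheory

lemma exists_measureReal_gt_lt_of_integral_le {Ω ι : Type*} [MeasurableSpace Ω] {μ : Measure Ω}
    [IsFiniteMeasure μ] {f : ι → Ω → ℝ} (hf_nonneg : ∀ i, 0 ≤ᵐ[μ] f i)
    (hf_int : ∀ i, Integrable (f i) μ) {M : ℝ} (hM : ∀ i, ∫ ω, f i ω ∂μ ≤ M) {ε : ℝ}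
    (hε : 0 < ε) : ∃ r, ∀ i, μ.real {ω | f i ω > r} < ε := by
  set r := (max M 0 + 1) / ε
  have hr : 0 < r := by positivity
  refine ⟨r, fun i ↦ ?_⟩
  have hmarkov : r * μ.real {ω | r ≤ f i ω} ≤ max M 0 :=
    (mul_meas_ge_le_integral_of_nonneg (hf_nonneg i) (hf_int i) r).trans
      ((hM i).trans (le_max_left _ _))
  calc μ.real {ω | f i ω > r} ≤ μ.real {ω | r ≤ f i ω} :=
        measureReal_mono <| Set.ofPred_subset_ofPred.mpr fun _ ↦ le_of_lt
    _ ≤ max M 0 / r := by rwa [le_div_iff₀ hr, mul_comm]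
    _ < ε := by
      rw [div_lt_iff₀ hr]
      simp only [r, mul_div_cancel₀ _ hε.ne']
      linarith

end MeasureTheory

theorem dekking_host_property_two_general {Ω : Type*} [MeasureSpace Ω]
    [IsProbabilityMeasure (ℙ : Measure Ω)]
    (Z Z' : ℕ → Ω → ℝ) (C : ℝ) (R : ℕ)
    (hint : ∀ n, Integrable (Z n))
    (hcopy : ∀ n, IdentDistrib (Z' n) (Z n) ℙ ℙ)
    (hindep : ∀ n, IndepFun (Z n) (Z' n) ℙ)
    (hmono : ∀ n, (∫ ω, Z n ω) ≤ ∫ ω, Z (n + 1) ω)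
    (hrec : ∀ n, R ≤ n →
      (∫ ω, Z (n + 1) ω) ≤
        (1 / 2) * ((∫ ω, Z (n + 1 - R) ω) + ∫ ω, Z (n + 1 - R) ω)
          - (1 / 2) * (∫ ω, |Z (n + 1 - R) ω - Z' (n + 1 - R) ω|) + C) :
    (∀ n, 1 ≤ n → (∫ ω, |Z n ω - Z' n ω|) ≤ 2 * C) ∧
    (∀ ε > 0, ∃ r : ℝ, ∀ n,
      (ℙ {ω | |Z n ω - ∫ ω', Z n ω'| > r}).toReal < ε) := by
  have hspread : ∀ n, 1 ≤ n → (∫ ω, |Z n ω - Z' n ω|) ≤ 2 * C := fun n ↦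
    le_two_mul_of_monotone_of_le_sub (d := fun n ↦ ∫ ω, |Z n ω - Z' n ω|)
      (monotone_nat_of_le_succ hmono) fun m hm ↦ by linarith [hrec m hm]
  have hdev : ∀ n,
      (∫ ω, |Z n ω - ∫ ω', Z n ω'|) ≤ max (∫ ω, |Z 0 ω - ∫ ω', Z 0 ω'|) (2 * C) := by
    intro n
    rcases Nat.eq_zero_or_pos n with rfl | hn
    · exact le_max_left _ _
    · exact (integral_abs_sub_integral_le_integral_abs_sub (hint n) (hcopy n) (hindep n)).trans
        ((hspread n hn).trans (le_max_right _ _))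
  exact ⟨hspread, fun ε hε ↦ exists_measureReal_gt_lt_of_integral_le
    (fun _ ↦ ae_of_all _ fun _ ↦ abs_nonneg _) (fun n ↦ ((hint n).sub (integrable_const _)).abs)
    hdev hε⟩

theorem dekking_host_property_two {Ω : Type*} [MeasureSpace Ω]
    [IsProbabilityMeasure (ℙ : Measure Ω)]
    (Z Z' : ℕ → Ω → ℝ) (C : ℝ) (R : ℕ) (hR : 1 ≤ R)
    (hint : ∀ n, Integrable (Z n)) (hint' : ∀ n, Integrable (Z' n))
    (hcopy : ∀ n, IdentDistrib (Z' n) (Z n) ℙ ℙ)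
    (hindep : ∀ n, IndepFun (Z n) (Z' n) ℙ)
    (hmono : ∀ n, (∫ ω, Z n ω) ≤ ∫ ω, Z (n + 1) ω)
    (hrec : ∀ n, R ≤ n →
      (∫ ω, Z (n + 1) ω) ≤
        (1 / 2) * ((∫ ω, Z (n + 1 - R) ω) + ∫ ω, Z (n + 1 - R) ω)
          - (1 / 2) * (∫ ω, |Z (n + 1 - R) ω - Z' (n + 1 - R) ω|) + C) :
    (∀ n, 1 ≤ n → (∫ ω, |Z n ω - Z' n ω|) ≤ 2 * C) ∧
    (∀ ε > 0, ∃ r : ℝ, ∀ n,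
      (ℙ {ω | |Z n ω - ∫ ω', Z n ω'| > r}).toReal < ε) :=
  dekking_host_property_two_general Z Z' C R hint hcopy hindep hmono hrec
end

section
/- Let (Z_n) be integrable random variables with E Z_{n+1} ≥ E Z_n for all n (monotone means), and suppose there are constants K, C ≥ 0 and integers n_1 ≤ n_2 ≤ n+1 (depending on n, with n+1-n_1 and n+1-n_2 bounded by a constant C₀) such that 2 E Z_{n+1} ≤ E Z_{n_1} + E Z_{n_2} - E|Z_{n_1} - Z''_{n_1}| + 2KC₀ + K(n_2 - n_1) for some independent copy Z''_{n_1} of Z_{n_1}. Then E|Z_{n_1} - Z''_{n_1}| ≤ 2KC₀ + K(n_2-n_1) for all n, hence (Z_n - E Z_n) is tight along n_1 = n+1-R_1. -/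
open MeasureTheory ProbabilityTheory

/-- If `X, Y` are independent integrable real random variables, then
`E|X - EY| ≤ E|X - Y|`. -/
lemma abs_dev_le_abs_diff {Ω : Type*} [MeasureSpace Ω]
    [IsProbabilityMeasure (ℙ : Measure Ω)]
    (X Y : Ω → ℝ) (hX : Integrable X) (hY : Integrable Y)
    (hind : IndepFun X Y ℙ) :
    (∫ ω, |X ω - ∫ ω', Y ω'|) ≤ ∫ ω, |X ω - Y ω| := by
  have hXm : AEMeasurable X ℙ := hX.aemeasurable
  have hYm : AEMeasurable Y ℙ := hY.aemeasurable
  set μX : Measure ℝ := Measure.map X ℙ with hμX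
  set μY : Measure ℝ := Measure.map Y ℙ with hμY
  have hPX : IsProbabilityMeasure μX := Measure.isProbabilityMeasure_map hXm
  have hPY : IsProbabilityMeasure μY := Measure.isProbabilityMeasure_map hYm
  -- integrability of identity w.r.t. pushforwards
  have hidX : Integrable (fun x : ℝ => x) μX := by
    rw [hμX]
    exact (integrable_map_measure aestronglyMeasurable_id hXm).mpr hX
  have hidY : Integrable (fun x : ℝ => x) μY := by
    rw [hμY]
    exact (integrable_map_measure aestronglyMeasurable_id hYm).mpr hY
  -- integrability on the product
  have hfst : Integrable (fun p : ℝ × ℝ => p.1) (μX.prod μY) := by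
    have := hidX.mul_prod (integrable_const (1 : ℝ)) (ν := μY)
    simpa using this
  have hsnd : Integrable (fun p : ℝ × ℝ => p.2) (μX.prod μY) := by
    have := (integrable_const (1 : ℝ)).mul_prod hidY (μ := μX)
    simpa using this
  have hprodInt : Integrable (fun p : ℝ × ℝ => |p.1 - p.2|) (μX.prod μY) :=
    (hfst.sub hsnd).abs
  -- the joint law is the product of the marginals
  have hmap : Measure.map (fun ω => (X ω, Y ω)) ℙ = μX.prod μY :=
    (indepFun_iff_map_prod_eq_prod_map_map hXm hYm).mp hind
  -- E Y as an integral against μY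
  have hEY : (∫ ω', Y ω') = ∫ y, y ∂μY := by
    rw [hμY]
    exact (integral_map hYm aestronglyMeasurable_id).symm
  -- rewrite RHS as a double integral
  have habs : Continuous (fun p : ℝ × ℝ => |p.1 - p.2|) :=
    (continuous_fst.sub continuous_snd).abs
  have hR : (∫ ω, |X ω - Y ω|) = ∫ x, ∫ y, |x - y| ∂μY ∂μX := by
    calc (∫ ω, |X ω - Y ω|)
        = ∫ p : ℝ × ℝ, |p.1 - p.2| ∂(Measure.map (fun ω => (X ω, Y ω)) ℙ) := by
          rw [integral_map (hXm.prodMk hYm) habs.aestronglyMeasurable]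
      _ = ∫ p : ℝ × ℝ, |p.1 - p.2| ∂(μX.prod μY) := by rw [hmap]
      _ = ∫ x, ∫ y, |x - y| ∂μY ∂μX := integral_prod _ hprodInt
  -- rewrite LHS as an integral against μX
  have hL : (∫ ω, |X ω - ∫ ω', Y ω'|) = ∫ x, |x - ∫ ω', Y ω'| ∂μX := by
    rw [hμX, integral_map hXm]
    exact (continuous_id.sub continuous_const).abs.aestronglyMeasurable
  rw [hL, hR]
  refine integral_mono (hidX.sub (integrable_const _)).abs
    hprodInt.integral_prod_left fun x => ?_
  have h1 : |x - ∫ ω', Y ω'| = |∫ y, (x - y) ∂μY| := by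
    rw [integral_sub (integrable_const x) hidY, integral_const, hEY]
    simp
  calc |x - ∫ ω', Y ω'| = |∫ y, (x - y) ∂μY| := h1
    _ ≤ ∫ y, |x - y| ∂μY := by
        simpa using norm_integral_le_integral_norm (fun y => x - y) (μ := μY)

theorem dekking_host_property_three {Ω : Type*} [MeasureSpace Ω]
    [IsProbabilityMeasure (ℙ : Measure Ω)]
    (Z Z'' : ℕ → Ω → ℝ) (K : ℝ) (C₀ : ℕ) (n₁ n₂ : ℕ → ℕ)
    (hK : 0 ≤ K)
    (hint : ∀ n, Integrable (Z n)) (hint'' : ∀ n, Integrable (Z'' n))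
    (hcopy : ∀ n, IdentDistrib (Z'' n) (Z n) ℙ ℙ)
    (hindep : ∀ n, IndepFun (Z n) (Z'' n) ℙ)
    (hmono : ∀ n, (∫ ω, Z n ω) ≤ ∫ ω, Z (n + 1) ω)
    (h12 : ∀ n, n₁ n ≤ n₂ n) (h2 : ∀ n, n₂ n ≤ n + 1)
    (hb1 : ∀ n, n + 1 - n₁ n ≤ C₀) (hb2 : ∀ n, n + 1 - n₂ n ≤ C₀)
    (hmain : ∀ n, 2 * (∫ ω, Z (n + 1) ω) ≤
        (∫ ω, Z (n₁ n) ω) + (∫ ω, Z (n₂ n) ω)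
          - (∫ ω, |Z (n₁ n) ω - Z'' (n₁ n) ω|)
          + 2 * K * C₀ + K * ((n₂ n : ℝ) - (n₁ n : ℝ))) :
    (∀ n, (∫ ω, |Z (n₁ n) ω - Z'' (n₁ n) ω|) ≤
        2 * K * C₀ + K * ((n₂ n : ℝ) - (n₁ n : ℝ))) ∧
    (∀ ε > 0, ∃ r : ℝ, ∀ n,
      (ℙ {ω | |Z (n₁ n) ω - ∫ ω', Z (n₁ n) ω'| > r}).toReal < ε) := by
  -- monotonicity of means
  have hmono' : Monotone (fun n => ∫ ω, Z n ω) :=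
    monotone_nat_of_le_succ hmono
  have hpart1 : ∀ n, (∫ ω, |Z (n₁ n) ω - Z'' (n₁ n) ω|) ≤
      2 * K * C₀ + K * ((n₂ n : ℝ) - (n₁ n : ℝ)) := by
    intro n
    have h1 : (∫ ω, Z (n₁ n) ω) ≤ ∫ ω, Z (n + 1) ω :=
      hmono' ((h12 n).trans (h2 n))
    have h2' : (∫ ω, Z (n₂ n) ω) ≤ ∫ ω, Z (n + 1) ω := hmono' (h2 n)
    have := hmain n
    linarith
  refine ⟨hpart1, ?_⟩
  -- uniform bound on the symmetrized deviation
  have hgap : ∀ n, (n₂ n : ℝ) - (n₁ n : ℝ) ≤ C₀ := by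
    intro n
    have h : n₂ n - n₁ n ≤ C₀ := le_trans (Nat.sub_le_sub_right (h2 n) _) (hb1 n)
    have : ((n₂ n - n₁ n : ℕ) : ℝ) ≤ (C₀ : ℝ) := Nat.cast_le.mpr h
    rwa [Nat.cast_sub (h12 n)] at this
  have hbound : ∀ n, (∫ ω, |Z (n₁ n) ω - ∫ ω', Z (n₁ n) ω'|) ≤ 3 * K * C₀ := by
    intro n
    have hid : (∫ ω', Z'' (n₁ n) ω') = ∫ ω', Z (n₁ n) ω' :=
      (hcopy (n₁ n)).integral_eq
    have hle : (∫ ω, |Z (n₁ n) ω - ∫ ω', Z (n₁ n) ω'|) ≤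
        ∫ ω, |Z (n₁ n) ω - Z'' (n₁ n) ω| := by
      have := abs_dev_le_abs_diff (Z (n₁ n)) (Z'' (n₁ n))
        (hint _) (hint'' _) (hindep (n₁ n))
      rwa [hid] at this
    have hKC : K * ((n₂ n : ℝ) - (n₁ n : ℝ)) ≤ K * C₀ :=
      mul_le_mul_of_nonneg_left (hgap n) hK
    linarith [hpart1 n]
  -- tightness via Markov's inequality
  intro ε hε
  set M : ℝ := 3 * K * C₀ with hM
  have hM0 : 0 ≤ M := by positivity
  refine ⟨(M + 1) / ε, fun n => ?_⟩
  set f : Ω → ℝ := fun ω => |Z (n₁ n) ω - ∫ ω', Z (n₁ n) ω'| with hf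
  have hfint : Integrable f := ((hint _).sub (integrable_const _)).abs
  have hr : (0 : ℝ) < (M + 1) / ε := div_pos (by linarith) hε
  have hmarkov : (M + 1) / ε * (ℙ {ω | (M + 1) / ε ≤ f ω}).toReal ≤ ∫ ω, f ω :=
    mul_meas_ge_le_integral_of_nonneg
      (Filter.Eventually.of_forall fun ω => abs_nonneg _) hfint _
  have hsub : (ℙ {ω | f ω > (M + 1) / ε}).toReal ≤
      (ℙ {ω | (M + 1) / ε ≤ f ω}).toReal := by
    refine ENNReal.toReal_mono (measure_ne_top _ _) (measure_mono fun ω hω => le_of_lt (show (M + 1) / ε < f ω from hω))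
  have hPle : (ℙ {ω | (M + 1) / ε ≤ f ω}).toReal ≤ M / ((M + 1) / ε) := by
    rw [le_div_iff₀ hr, mul_comm]
    exact hmarkov.trans (hbound n)
  have hfin : M / ((M + 1) / ε) < ε := by
    rw [div_div_eq_mul_div, div_lt_iff₀ (by linarith)]
    nlinarith
  calc (ℙ {ω | f ω > (M + 1) / ε}).toReal
      ≤ (ℙ {ω | (M + 1) / ε ≤ f ω}).toReal := hsub
    _ ≤ M / ((M + 1) / ε) := hPle
    _ < ε := hfin
end

section
/- Let G and H be graphs and suppose G contains two vertex-disjoint subgraphs each isomorphic to G with roots equidistant from the root of G (Properties (1) and (2)). Then the product graph G × H (with root (root_G, root_H)) also contains two vertex-disjoint subgraphs isomorphic to G × H with roots equidistant from the root of G × H. -/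
open SimpleGraph

/-!
Apply each self-embedding of `G` in the first coordinate only. The two resulting copies of
`G □ H` have vertex sets `range f₁ ×ˢ univ` and `range f₂ ×ˢ univ`, hence are disjoint, and
their roots `(fᵢ oG, oH)` share the second coordinate with `(oG, oH)`, so their distances to it
are the distances in `G`, because distance in `G □ H` is the sum of the coordinate distances.
-/

namespace SimpleGraph

variable {α β γ δ : Type*} {G : SimpleGraph α} {G' : SimpleGraph β} {H : SimpleGraph γ}
  {H' : SimpleGraph δ}

def Embedding.boxProdMap (f : G ↪g G') (g : H ↪g H') : (G □ H) ↪g (G' □ H') where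
  toEmbedding := f.toEmbedding.prodMap g.toEmbedding
  map_rel_iff' := by simp [boxProd_adj, f.injective.eq_iff, g.injective.eq_iff]

theorem Embedding.range_boxProdMap (f : G ↪g G') (g : H ↪g H') :
    Set.range (f.boxProdMap g) = Set.range f ×ˢ Set.range g :=
  Set.range_prodMap

theorem dist_boxProd_mk_left (a₁ a₂ : α) (b : γ) :
    (G □ H).dist (a₁, b) (a₂, b) = G.dist a₁ a₂ := by
  rw [dist, dist, edist_boxProd, edist_self, add_zero]

end SimpleGraph

theorem boxProd_preserves_recursive_structure {V W : Type*}
    (G : SimpleGraph V) (H : SimpleGraph W) (oG : V) (oH : W)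
    (f₁ f₂ : G ↪g G)
    (hdisj : Disjoint (Set.range f₁) (Set.range f₂))
    (heq : G.dist oG (f₁ oG) = G.dist oG (f₂ oG)) :
    ∃ F₁ F₂ : (G □ H) ↪g (G □ H),
      Disjoint (Set.range F₁) (Set.range F₂) ∧
      (G □ H).dist (oG, oH) (F₁ (oG, oH)) = (G □ H).dist (oG, oH) (F₂ (oG, oH)) := by
  refine ⟨f₁.boxProdMap Embedding.refl, f₂.boxProdMap Embedding.refl, ?_, ?_⟩
  · rw [Embedding.range_boxProdMap, Embedding.range_boxProdMap]
    exact Set.disjoint_prod.mpr (Or.inl hdisj)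
  · exact (dist_boxProd_mk_left _ _ _).trans (heq.trans (dist_boxProd_mk_left _ _ _).symm)
end
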